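/- arXiv:cs/0505084 — 2 statements merged into one kernel-verified Lean document; each statement's English description precedes it below -/
import Mathlib

section
/- If M is a simple tunnel-free digital arc with v vertices and p pixels, then v = 2(p + 1). -/
open Set

/-- A point of `ℤ²`, identified with the pixel centered there. -/
abbrev Pt := ℤ × ℤ

/-- Two pixels are 0-adjacent if they are distinct and share at least a vertex. -/
def adj0 (a b : Pt) : Prop := a ≠ b ∧ |a.1 - b.1| ≤ 1 ∧ |a.2 - b.2| ≤ 1

/-- Two pixels are 1-adjacent if they share an edge. -/
def adj1 (a b : Pt) : Prop := |a.1 - b.1| + |a.2 - b.2| = 1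

/-- Adjacency parameterized by `α ∈ {0,1}`. -/
def adjA (α : ℕ) : Pt → Pt → Prop := if α = 0 then adj0 else adj1

/-- Connectivity within `S` by a path of consecutively `adj`-adjacent points. -/
def connIn (adj : Pt → Pt → Prop) (S : Set Pt) (x y : Pt) : Prop :=
  Relation.ReflTransGen (fun u v => u ∈ S ∧ v ∈ S ∧ adj u v) x y

/-- The connected components of `S` with respect to `adj`. -/
def components (adj : Pt → Pt → Prop) (S : Set Pt) : Set (Set Pt) :=
  {C | ∃ x ∈ S, C = {y | y ∈ S ∧ connIn adj S x y}}

/-- Number of 0-connected components of `S`. -/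
noncomputable def ccount (S : Set Pt) : ℕ := (components adj0 S).ncard

/-- Number of holes: finite 1-components of the complement of `S`. -/
noncomputable def hcount (S : Set Pt) : ℕ :=
  {C | C ∈ components adj1 Sᶜ ∧ C.Finite}.ncard

/-- The four lattice points `{q, q+(1,0), q+(0,1), q+(1,1)}`: used both for the
corner set of the pixel `q` (in shifted lattice coordinates) and for the 2-block
with base point `q`. -/
def cell (q : Pt) : Set Pt := {q, (q.1 + 1, q.2), (q.1, q.2 + 1), (q.1 + 1, q.2 + 1)}

/-- Number of distinct grid points occurring as corners of pixels of `S`. -/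
noncomputable def vcount (S : Set Pt) : ℕ := (⋃ p ∈ S, cell p).ncard

/-- Number of 2-blocks (2×2 grid squares of pixels) contained in `S`. -/
noncomputable def bcount (S : Set Pt) : ℕ := {q | cell q ⊆ S}.ncard

/-- Diagonal adjacency: 0-adjacent but not 1-adjacent. -/
def diagAdj (a b : Pt) : Prop := |a.1 - b.1| = 1 ∧ |a.2 - b.2| = 1

/-- `w` is a 0-tunnel of `S`: exactly two pixels of `S` have `w` as a corner,
and these two pixels meet only diagonally at `w`. -/
def tunnelAt (S : Set Pt) (w : Pt) : Prop :=
  ∃ a b : Pt, a ∈ S ∧ b ∈ S ∧ diagAdj a b ∧ {p | p ∈ S ∧ w ∈ cell p} = {a, b}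

/-- Number of 0-tunnels of `S`. -/
noncomputable def tcount (S : Set Pt) : ℕ := {w | tunnelAt S w}.ncard

/-- `S` is tunnel-free. -/
def TunnelFree (S : Set Pt) : Prop := ∀ w : Pt, ¬ tunnelAt S w

/-- A consequence-style notion of one-dimensionality: no pixel of `M` is
`adj`-adjacent to three pairwise `adj`-adjacent pixels of `M`. -/
def OneDim (adj : Pt → Pt → Prop) (M : Set Pt) : Prop :=
  ∀ p ∈ M, ¬ ∃ a ∈ M, ∃ b ∈ M, ∃ c ∈ M,
    adj p a ∧ adj p b ∧ adj p c ∧ adj a b ∧ adj a c ∧ adj b c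

/-- `M` is `adj`-connected. -/
def ConnectedObj (adj : Pt → Pt → Prop) (M : Set Pt) : Prop :=
  ∀ x ∈ M, ∀ y ∈ M, connIn adj M x y

/-- A digital curve: a nonempty finite 0-connected one-dimensional digital object. -/
def DigitalCurve (M : Set Pt) : Prop :=
  M.Finite ∧ M.Nonempty ∧ ConnectedObj adj0 M ∧ OneDim adj0 M

/-- A simple closed digital curve with respect to `adj`: a cyclic sequence of
pixels in which the `adj`-adjacent pairs are exactly the cyclically consecutive
ones, and which is one-dimensional. -/
def SimpleClosedCurve (adj : Pt → Pt → Prop) (M : Set Pt) : Prop :=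
  ∃ l : ℕ, 0 < l ∧ ∃ f : ZMod l → Pt, Function.Injective f ∧ Set.range f = M ∧
    (∀ i j : ZMod l, adj (f i) (f j) ↔ j = i + 1 ∨ i = j + 1) ∧ OneDim adj M

/-- A simple digital arc: a nonempty 0-connected proper subset of a simple
closed digital curve. -/
def SimpleArc (adj : Pt → Pt → Prop) (M : Set Pt) : Prop :=
  M.Nonempty ∧ ConnectedObj adj0 M ∧
    ∃ ρ : Set Pt, SimpleClosedCurve adj ρ ∧ M ⊆ ρ ∧ M ≠ ρ


/-! ### Auxiliary geometric lemmas -/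

lemma mem_cell {p q : Pt} : p ∈ cell q ↔ (p.1 = q.1 ∨ p.1 = q.1 + 1) ∧ (p.2 = q.2 ∨ p.2 = q.2 + 1) := by
  obtain ⟨x, y⟩ := p; obtain ⟨a, b⟩ := q
  simp [cell, Prod.ext_iff]; omega

lemma adj1_iff {a b : Pt} : adj1 a b ↔ (a.1 - b.1).natAbs + (a.2 - b.2).natAbs = 1 := by
  rw [adj1, Int.abs_eq_natAbs, Int.abs_eq_natAbs]; omega

lemma adj0_iff {a b : Pt} : adj0 a b ↔ (a ≠ b ∧ (a.1 - b.1).natAbs ≤ 1 ∧ (a.2 - b.2).natAbs ≤ 1) := by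
  rw [adj0, Int.abs_eq_natAbs, Int.abs_eq_natAbs]
  exact and_congr Iff.rfl (by omega)

lemma adj0_cases {a b : Pt} (h : adj0 a b) : adj1 a b ∨ diagAdj a b := by
  rw [adj0_iff] at h
  obtain ⟨hne, h1, h2⟩ := h
  rw [adj1_iff, diagAdj, Int.abs_eq_natAbs, Int.abs_eq_natAbs]
  have : a.1 ≠ b.1 ∨ a.2 ≠ b.2 := by
    by_contra hc; push_neg at hc; exact hne (Prod.ext hc.1 hc.2)
  omega

lemma adj1_to_adj0 {a b : Pt} (h : adj1 a b) : adj0 a b := by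
  rw [adj1_iff] at h; rw [adj0_iff]
  refine ⟨fun he => ?_, by omega, by omega⟩
  rw [he] at h; simp at h

lemma cell_disjoint {a b : Pt} (hne : a ≠ b) (h : ¬ adj0 a b) : cell a ∩ cell b = ∅ := by
  rw [adj0_iff] at h; push_neg at h
  have := h hne
  ext p
  simp only [Set.mem_inter_iff, Set.mem_empty_iff_false, iff_false, not_and, mem_cell]
  omega

lemma cell_mid {c u v p : Pt} (hu : adj1 c u) (hv : adj1 c v) (huv : u ≠ v)
    (hp : p ∈ cell u) (hq : p ∈ cell v) : p ∈ cell c := by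
  rw [adj1_iff] at hu hv
  rw [mem_cell] at hp hq ⊢
  have : u.1 ≠ v.1 ∨ u.2 ≠ v.2 := by
    by_contra hc; push_neg at hc; exact huv (Prod.ext hc.1 hc.2)
  omega

/-! ### Finset cells and counting -/

def cellF (q : Pt) : Finset Pt := {q, (q.1 + 1, q.2), (q.1, q.2 + 1), (q.1 + 1, q.2 + 1)}

lemma coe_cellF (q : Pt) : (cellF q : Set Pt) = cell q := by
  simp [cellF, cell]

lemma mem_cellF {p q : Pt} : p ∈ cellF q ↔ p ∈ cell q := by
  rw [← coe_cellF]; simp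

lemma card_cellF (q : Pt) : (cellF q).card = 4 := by
  obtain ⟨x, y⟩ := q
  rw [cellF, Finset.card_insert_of_notMem, Finset.card_insert_of_notMem,
    Finset.card_insert_of_notMem, Finset.card_singleton] <;>
    simp [Prod.ext_iff]

lemma card_inter_adj1 {a b : Pt} (h : adj1 a b) : (cellF a ∩ cellF b).card = 2 := by
  rw [adj1_iff] at h
  obtain ⟨x, y⟩ := a; obtain ⟨u, v⟩ := b
  simp only at h
  have h4 : (u = x + 1 ∧ v = y) ∨ (u = x - 1 ∧ v = y) ∨ (u = x ∧ v = y + 1) ∨ (u = x ∧ v = y - 1) := by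
    omega
  have key : ∀ w z : Pt, w ≠ z → cellF (x, y) ∩ cellF (u, v) = {w, z} →
      (cellF (x, y) ∩ cellF (u, v)).card = 2 := by
    intro w z hwz he
    rw [he, Finset.card_insert_of_notMem (by simpa using hwz), Finset.card_singleton]
  rcases h4 with ⟨h1, h2⟩ | ⟨h1, h2⟩ | ⟨h1, h2⟩ | ⟨h1, h2⟩
  · exact key (x+1, y) (x+1, y+1) (by simp) (by ext ⟨p, q⟩; simp [cellF, Prod.ext_iff]; omega)
  · exact key (x, y) (x, y+1) (by simp) (by ext ⟨p, q⟩; simp [cellF, Prod.ext_iff]; omega)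
  · exact key (x, y+1) (x+1, y+1) (by simp) (by ext ⟨p, q⟩; simp [cellF, Prod.ext_iff]; omega)
  · exact key (x, y) (x+1, y) (by simp) (by ext ⟨p, q⟩; simp [cellF, Prod.ext_iff]; omega)

section PathCount
variable {n : ℕ} {g : ℕ → Pt} {M : Set Pt}

lemma path_union_card
    (hinj : ∀ j k, j < n → k < n → g j = g k → j = k)
    (h1 : ∀ k, k + 1 < n → adj1 (g k) (g (k+1)))
    (h3 : ∀ j k, k < n → j + 3 ≤ k → ¬ adj0 (g j) (g k))
    (h2 : ∀ j, j + 2 < n → cell (g j) ∩ cell (g (j+2)) ⊆ cell (g (j+1))) :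
    ∀ m, m + 1 ≤ n →
      (((Finset.range (m+1)).biUnion (fun k => cellF (g k))).card = 2 * (m + 1) + 2) := by
  intro m
  induction m with
  | zero =>
    intro _
    simp [card_cellF]
  | succ m ih =>
    intro hn
    show ((Finset.range (m+2)).biUnion (fun k => cellF (g k))).card = 2 * (m + 2) + 2
    have hU : (Finset.range (m+2)).biUnion (fun k => cellF (g k)) =
        cellF (g (m+1)) ∪ (Finset.range (m+1)).biUnion (fun k => cellF (g k)) := by
      rw [Finset.range_add_one, Finset.biUnion_insert]
    have hinter : cellF (g (m+1)) ∩ (Finset.range (m+1)).biUnion (fun k => cellF (g k)) =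
        cellF (g m) ∩ cellF (g (m+1)) := by
      ext x
      simp only [Finset.mem_inter, Finset.mem_biUnion, Finset.mem_range]
      constructor
      · rintro ⟨hx, k, hk, hxk⟩
        refine ⟨?_, hx⟩
        rcases Nat.lt_or_ge (k + 2) (m + 1) with hk2 | hk2
        · exfalso
          have hne : g k ≠ g (m+1) := fun he => by
            have := hinj k (m+1) (by omega) (by omega) he; omega
          have hdis := cell_disjoint hne (h3 k (m+1) (by omega) (by omega))
          have hxmem : x ∈ cell (g k) ∩ cell (g (m+1)) :=
            ⟨mem_cellF.mp hxk, mem_cellF.mp hx⟩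
          rw [hdis] at hxmem
          exact hxmem
        · rcases Nat.lt_or_ge k m with hkm | hkm
          · have hk2' : k + 2 = m + 1 := by omega
            have hmid := h2 k (by omega)
              ⟨mem_cellF.mp hxk, by rw [hk2']; exact mem_cellF.mp hx⟩
            rw [mem_cellF, show m = k + 1 by omega]
            exact hmid
          · have : k = m := by omega
            subst this
            exact hxk
      · rintro ⟨hm, hx⟩
        exact ⟨hx, m, by omega, hm⟩
    have hadj : adj1 (g m) (g (m+1)) := h1 m (by omega)
    have hci := card_inter_adj1 hadj
    have hcard := Finset.card_union_add_card_inter (cellF (g (m+1)))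
      ((Finset.range (m+1)).biUnion (fun k => cellF (g k)))
    rw [hinter, hci] at hcard
    rw [hU]
    have h4 := card_cellF (g (m+1))
    have ihv := ih (by omega)
    omega

lemma final_count (hn : 1 ≤ n)
    (hmem : ∀ k, k < n → g k ∈ M) (hsur : ∀ x ∈ M, ∃ k, k < n ∧ g k = x)
    (hinj : ∀ j k, j < n → k < n → g j = g k → j = k)
    (h1 : ∀ k, k + 1 < n → adj1 (g k) (g (k+1)))
    (h3 : ∀ j k, k < n → j + 3 ≤ k → ¬ adj0 (g j) (g k))
    (h2 : ∀ j, j + 2 < n → cell (g j) ∩ cell (g (j+2)) ⊆ cell (g (j+1))) :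
    (vcount M : ℤ) = 2 * ((M.ncard : ℤ) + 1) := by
  have hMeq : M = ↑((Finset.range n).image g) := by
    ext x
    simp only [Finset.coe_image, Finset.coe_range, Set.mem_image, Set.mem_Iio]
    constructor
    · intro hx; obtain ⟨k, hk, he⟩ := hsur x hx; exact ⟨k, hk, he⟩
    · rintro ⟨k, hk, rfl⟩; exact hmem k hk
  have hncard : M.ncard = n := by
    rw [hMeq, Set.ncard_coe_finset, Finset.card_image_of_injOn, Finset.card_range]
    intro a ha b hb
    simp only [Finset.mem_coe, Finset.mem_range] at ha hb
    exact hinj a b ha hb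
  have hv : vcount M = 2 * n + 2 := by
    have hUeq : (⋃ p ∈ M, cell p) =
        ↑((Finset.range n).biUnion (fun k => cellF (g k))) := by
      ext z
      simp only [Set.mem_iUnion, Finset.coe_biUnion, Finset.mem_coe, Finset.mem_range,
        Set.mem_iUnion, exists_prop]
      constructor
      · rintro ⟨p, hp, hz⟩
        obtain ⟨k, hk, rfl⟩ := hsur p hp
        exact ⟨k, hk, by rw [mem_cellF]; exact hz⟩
      · rintro ⟨k, hk, hz⟩
        exact ⟨g k, hmem k hk, mem_cellF.mp hz⟩
    rw [vcount, hUeq, Set.ncard_coe_finset]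
    obtain ⟨m, rfl⟩ : ∃ m, n = m + 1 := ⟨n - 1, by omega⟩
    rw [path_union_card hinj h1 h3 h2 m (le_refl _)]
  rw [hv, hncard]; push_cast; ring

end PathCount

/-! ### ZMod lemmas -/

lemma natCast_inj_lt {l a b : ℕ} (ha : a < l) (hb : b < l) (h : (a : ZMod l) = b) : a = b := by
  haveI : NeZero l := ⟨by omega⟩
  have h1 := ZMod.val_cast_of_lt ha
  have h2 := ZMod.val_cast_of_lt hb
  rw [h] at h1
  omega

lemma succ_mod {l a b : ℕ} (ha : a < l) (hb1 : 1 ≤ b) (hb : b < l)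
    (h : (b : ZMod l) = (a : ZMod l) + 1) : b = a + 1 := by
  haveI : NeZero l := ⟨by omega⟩
  have hcast : ((a + 1 : ℕ) : ZMod l) = (a : ZMod l) + 1 := by push_cast; ring
  rcases Nat.lt_or_ge (a + 1) l with h1 | h1
  · exact natCast_inj_lt hb h1 (by rw [h, ← hcast])
  · have hal : a + 1 = l := by omega
    have h0 : ((a + 1 : ℕ) : ZMod l) = 0 := by rw [hal]; exact ZMod.natCast_self l
    rw [hcast, ← h] at h0
    have : b = 0 := natCast_inj_lt hb (by omega) (by rw [h0]; norm_cast)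
    omega

lemma zmod_three {l : ℕ} (h : (3 : ZMod l) = 0) (x i : ZMod l) :
    x = i ∨ x = i + 1 ∨ x = i + 2 := by
  rcases Nat.eq_zero_or_pos l with rfl | hl
  · exact absurd h (by decide)
  haveI : NeZero l := ⟨by omega⟩
  have hdvd : l ∣ 3 := by
    have h3 : ((3 : ℕ) : ZMod l) = 0 := by push_cast; exact h
    exact (ZMod.natCast_eq_zero_iff 3 l).mp h3
  rcases (Nat.prime_three.eq_one_or_self_of_dvd l hdvd) with rfl | rfl
  · left; exact Subsingleton.elim x i
  · revert x i; decide

lemma cons3 {l : ℕ} {i j k : ZMod l} (hij : i ≠ j) (hik : i ≠ k) (hjk : j ≠ k)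
    (h1 : j = i + 1 ∨ i = j + 1) (h2 : k = i + 1 ∨ i = k + 1)
    (h3 : k = j + 1 ∨ j = k + 1) : ∀ m : ZMod l, m = i ∨ m = j ∨ m = k := by
  intro m
  rcases h1 with h1 | h1 <;> rcases h2 with h2 | h2
  · exact absurd (h1.trans h2.symm) hjk
  · rcases h3 with h3 | h3
    · have h30 : (3 : ZMod l) = 0 := by linear_combination -h2 - h3 - h1
      rcases zmod_three h30 m k with hm | hm | hm
      · right; right; exact hm
      · left; rw [hm, ← h2]
      · right; left; linear_combination hm - h1 - h2
    · exact absurd (h2.trans h3.symm) hij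
  · rcases h3 with h3 | h3
    · exact absurd (h1.trans h3.symm) hik
    · have h30 : (3 : ZMod l) = 0 := by linear_combination -h1 - h2 - h3
      rcases zmod_three h30 m j with hm | hm | hm
      · right; left; exact hm
      · left; rw [hm, ← h1]
      · right; right; linear_combination hm - h2 - h1
  · have : j + 1 = k + 1 := h1.symm.trans h2
    exact absurd (add_right_cancel this) hjk

/-! ### The filler pixel at a diagonal pair -/

lemma filler {M : Set Pt} (ht : TunnelFree M) {u v : Pt} (hu : u ∈ M) (hv : v ∈ M)
    (hd : diagAdj u v) : ∃ c ∈ M, adj1 c u ∧ adj1 c v := by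
  obtain ⟨hdx, hdy⟩ := hd
  rw [Int.abs_eq_natAbs] at hdx hdy
  have hx := max_choice u.1 v.1
  have hy := max_choice u.2 v.2
  have hwu : ((max u.1 v.1, max u.2 v.2) : Pt) ∈ cell u := by
    rw [mem_cell]; dsimp only; omega
  have hwv : ((max u.1 v.1, max u.2 v.2) : Pt) ∈ cell v := by
    rw [mem_cell]; dsimp only; omega
  have hT : {p | p ∈ M ∧ ((max u.1 v.1, max u.2 v.2) : Pt) ∈ cell p} ≠ {u, v} :=
    fun he => ht _ ⟨u, v, hu, hv,
      ⟨by rw [Int.abs_eq_natAbs]; omega, by rw [Int.abs_eq_natAbs]; omega⟩, he⟩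
  have hns : ¬ ({p | p ∈ M ∧ ((max u.1 v.1, max u.2 v.2) : Pt) ∈ cell p} ⊆ {u, v}) := by
    intro hsub
    apply hT
    apply Set.Subset.antisymm hsub
    rintro p (rfl | rfl)
    · exact ⟨hu, hwu⟩
    · exact ⟨hv, hwv⟩
  rw [Set.not_subset] at hns
  obtain ⟨c, ⟨hcM, hcw⟩, hcne⟩ := hns
  simp only [Set.mem_insert_iff, Set.mem_singleton_iff, not_or] at hcne
  obtain ⟨hcu, hcv⟩ := hcne
  rw [mem_cell] at hcw
  rw [mem_cell] at hwu hwv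
  dsimp only at hcw hwu hwv
  have hcu' : c.1 ≠ u.1 ∨ c.2 ≠ u.2 := by
    by_contra hc; push_neg at hc; exact hcu (Prod.ext hc.1 hc.2)
  have hcv' : c.1 ≠ v.1 ∨ c.2 ≠ v.2 := by
    by_contra hc; push_neg at hc; exact hcv (Prod.ext hc.1 hc.2)
  exact ⟨c, hcM, by rw [adj1_iff]; omega, by rw [adj1_iff]; omega⟩

/-! ### Extraction of a path from an arc -/

lemma arc_path {M : Set Pt} {l : ℕ} (hl : 0 < l) (f : ZMod l → Pt)
    (hf : Function.Injective f) (hMsub : M ⊆ Set.range f) (hMne : M.Nonempty)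
    (hMprop : M ≠ Set.range f) (hconn : ConnectedObj adj0 M) (ht : TunnelFree M)
    (C1 : ∀ i j : ZMod l, f i ∈ M → f j ∈ M → adj1 (f i) (f j) → j = i + 1 ∨ i = j + 1)
    (C2 : ∀ i j : ZMod l, f i ∈ M → f j ∈ M → (j = i + 1 ∨ i = j + 1) → adj1 (f i) (f j)) :
    ∃ n : ℕ, 1 ≤ n ∧ ∃ g : ℕ → Pt,
      (∀ k, k < n → g k ∈ M) ∧ (∀ x ∈ M, ∃ k, k < n ∧ g k = x) ∧
      (∀ j k, j < n → k < n → g j = g k → j = k) ∧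
      (∀ k, k + 1 < n → adj1 (g k) (g (k+1))) ∧
      (∀ j k, k < n → j + 3 ≤ k → ¬ adj0 (g j) (g k)) ∧
      (∀ j, j + 2 < n → cell (g j) ∩ cell (g (j+2)) ⊆ cell (g (j+1))) := by
  haveI : NeZero l := ⟨hl.ne'⟩
  have hssub : M ⊂ Set.range f := ⟨hMsub, fun h => hMprop (le_antisymm hMsub h)⟩
  obtain ⟨y0, hy0r, hy0M⟩ := Set.exists_of_ssubset hssub
  obtain ⟨i0, rfl⟩ := hy0r
  set idx : Pt → ℕ := fun x => ((Function.invFun f x) - i0).val with hidxdef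
  have hidx : ∀ x ∈ M, f (i0 + ((idx x : ℕ) : ZMod l)) = x := by
    intro x hx
    have h1 : f (Function.invFun f x) = x := Function.invFun_eq (hMsub hx)
    have h2 : ((((Function.invFun f x) - i0).val : ℕ) : ZMod l) =
        (Function.invFun f x) - i0 := ZMod.natCast_zmod_val _
    rw [hidxdef]
    dsimp only
    rw [h2, show i0 + (Function.invFun f x - i0) = Function.invFun f x by ring]
    exact h1
  have hidxl : ∀ x, idx x < l := fun x => ZMod.val_lt _
  have hidx1 : ∀ x ∈ M, 1 ≤ idx x := by
    intro x hx
    rcases Nat.eq_zero_or_pos (idx x) with h0 | h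
    · exfalso
      have h1 := hidx x hx
      rw [h0] at h1
      simp only [Nat.cast_zero, add_zero] at h1
      rw [h1] at hy0M
      exact hy0M hx
    · exact h
  have hidxeq : ∀ x ∈ M, ∀ a : ℕ, a < l → f (i0 + (a : ZMod l)) = x → idx x = a := by
    intro x hx a ha hfa
    have h1 := hidx x hx
    have h2 : (idx x : ZMod l) = (a : ZMod l) := add_left_cancel (hf (h1.trans hfa.symm))
    exact natCast_inj_lt (hidxl x) ha h2
  -- step lemma
  have step1 : ∀ a b, a ∈ M → b ∈ M → adj1 a b →
      idx b = idx a + 1 ∨ idx a = idx b + 1 := by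
    intro a b ha hb hab
    have hc := C1 (i0 + (idx a : ZMod l)) (i0 + (idx b : ZMod l))
      (by rw [hidx a ha]; exact ha) (by rw [hidx b hb]; exact hb)
      (by rw [hidx a ha, hidx b hb]; exact hab)
    rcases hc with h | h
    · left
      rw [add_assoc] at h
      exact succ_mod (hidxl a) (hidx1 b hb) (hidxl b) (add_left_cancel h)
    · right
      rw [add_assoc] at h
      exact succ_mod (hidxl b) (hidx1 a ha) (hidxl a) (add_left_cancel h)
  have K3 : ∀ u v, u ∈ M → v ∈ M → adj0 u v →
      (idx u + 1 = idx v ∨ idx v + 1 = idx u) ∨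
      ∃ c ∈ M, adj1 c u ∧ adj1 c v ∧ (idx u + 2 = idx v ∨ idx v + 2 = idx u) ∧
        idx u + idx v = 2 * idx c := by
    intro u v hu hv hadj
    have hne : u ≠ v := hadj.1
    have hidxne : idx u ≠ idx v := fun h => hne (by rw [← hidx u hu, ← hidx v hv, h])
    rcases adj0_cases hadj with h1 | hdg
    · rcases step1 u v hu hv h1 with h | h
      · left; omega
      · left; omega
    · obtain ⟨c, hcM, hcu, hcv⟩ := filler ht hu hv hdg
      have s1 := step1 c u hcM hu hcu
      have s2 := step1 c v hcM hv hcv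
      right
      exact ⟨c, hcM, hcu, hcv, by omega, by omega⟩
  -- the interval
  have hMfin : M.Finite := (Set.finite_range f).subset hMsub
  set J : Set ℕ := idx '' M with hJdef
  have hJne : J.Nonempty := hMne.image _
  have hJfin : J.Finite := hMfin.image _
  have haJ : sInf J ∈ J := Nat.sInf_mem hJne
  have hbdd : BddAbove J := hJfin.bddAbove
  have hbJ : sSup J ∈ J := Nat.sSup_mem hJne hbdd
  set a0 := sInf J with ha0def
  set b0 := sSup J with hb0def
  have ha0le : ∀ j ∈ J, a0 ≤ j := fun j hj => Nat.sInf_le hj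
  have hb0ge : ∀ j ∈ J, j ≤ b0 := fun j hj => le_csSup hbdd hj
  obtain ⟨x0, hx0M, hx0i⟩ := haJ
  have hgap : ∀ m, a0 ≤ m → m ∉ J → ∀ y, y ∈ M → idx y < m := by
    intro m hm hmJ y hy
    have hcon : connIn adj0 M x0 y := hconn x0 hx0M y hy
    clear hy
    rw [connIn] at hcon
    induction hcon with
    | refl =>
      have h1 : a0 ≠ m := fun h => hmJ (h ▸ ⟨x0, hx0M, hx0i⟩)
      omega
    | @tail b c hst hrel ih =>
      obtain ⟨huM, hvM, hadj⟩ := hrel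
      have hvJ : idx c ∈ J := ⟨c, hvM, rfl⟩
      have hvm : idx c ≠ m := fun h => hmJ (h ▸ hvJ)
      rcases K3 b c huM hvM hadj with h | ⟨d, hdM, _, _, hpm, hsum⟩
      · omega
      · have hdJ : idx d ∈ J := ⟨d, hdM, rfl⟩
        have hdm : idx d ≠ m := fun h => hmJ (h ▸ hdJ)
        omega
  have hJint : ∀ m, a0 ≤ m → m ≤ b0 → m ∈ J := by
    intro m h1 h2
    by_contra hmJ
    obtain ⟨yb, hybM, hybi⟩ := hbJ
    have := hgap m h1 hmJ yb hybM
    omega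
  have ha1 : 1 ≤ a0 := by
    have := hidx1 x0 hx0M; omega
  have hbl : b0 < l := by
    obtain ⟨yb, hybM, hybi⟩ := hbJ
    have := hidxl yb; omega
  have hab : a0 ≤ b0 := by
    have := hb0ge a0 ⟨x0, hx0M, hx0i⟩; omega
  -- the path
  refine ⟨b0 - a0 + 1, by omega, fun k => f (i0 + ((a0 + k : ℕ) : ZMod l)), ?_⟩
  set n := b0 - a0 + 1 with hndef
  set g : ℕ → Pt := fun k => f (i0 + ((a0 + k : ℕ) : ZMod l)) with hgdef
  have hgm : ∀ k, k < n → g k ∈ M ∧ idx (g k) = a0 + k := by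
    intro k hk
    obtain ⟨x, hxM, hxi⟩ := hJint (a0 + k) (by omega) (by omega)
    have hgx : g k = x := by
      rw [hgdef]
      dsimp only
      rw [← hxi]
      exact hidx x hxM
    rw [hgx]
    exact ⟨hxM, hxi⟩
  have hinj : ∀ j k, j < n → k < n → g j = g k → j = k := by
    intro j k hj hk he
    have h1 := (hgm j hj).2
    have h2 := (hgm k hk).2
    rw [he] at h1
    omega
  refine ⟨fun k hk => (hgm k hk).1, ?_, hinj, ?_, ?_, ?_⟩
  · -- surjectivity
    intro x hx
    have hle : a0 ≤ idx x := ha0le _ ⟨x, hx, rfl⟩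
    have hge : idx x ≤ b0 := hb0ge _ ⟨x, hx, rfl⟩
    refine ⟨idx x - a0, by omega, ?_⟩
    rw [hgdef]
    dsimp only
    rw [show a0 + (idx x - a0) = idx x by omega]
    exact hidx x hx
  · -- consecutive adjacency
    intro k hk
    have h1 := hgm k (by omega)
    have h2 := hgm (k+1) (by omega)
    exact C2 (i0 + ((a0 + k : ℕ) : ZMod l)) (i0 + ((a0 + (k+1) : ℕ) : ZMod l))
      h1.1 h2.1 (Or.inl (by push_cast; ring))
  · -- far pairs
    intro j k hk h3le hadj
    have h1 := hgm j (by omega)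
    have h2 := hgm k hk
    rcases K3 _ _ h1.1 h2.1 hadj with h | ⟨c, _, _, _, hpm, hsum⟩
    · omega
    · omega
  · -- middle inclusion
    intro j hj p hp
    obtain ⟨hp1, hp2⟩ := hp
    have h1 := hgm j (by omega)
    have h2 := hgm (j+2) (by omega)
    have hne : g j ≠ g (j+2) := fun he => by
      have := hinj j (j+2) (by omega) (by omega) he; omega
    by_cases hadj : adj0 (g j) (g (j+2))
    · rcases K3 _ _ h1.1 h2.1 hadj with h | ⟨c, hcM, hcu, hcv, hpm, hsum⟩
      · omega
      · have hidxc : idx c = a0 + (j + 1) := by omega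
        have hc : c = g (j+1) := by
          rw [← hidx c hcM, hidxc]
        rw [← hc]
        exact cell_mid hcu hcv hne hp1 hp2
    · exfalso
      have hdis := cell_disjoint hne hadj
      have : p ∈ cell (g j) ∩ cell (g (j+2)) := ⟨hp1, hp2⟩
      rw [hdis] at this
      exact this

theorem tunnel_free_arc (M : Set Pt)
    (hM : SimpleArc adj0 M ∨ SimpleArc adj1 M) (ht : TunnelFree M) :
    (vcount M : ℤ) = 2 * ((M.ncard : ℤ) + 1) := by
  have main : ∀ (l : ℕ), 0 < l → ∀ f : ZMod l → Pt, Function.Injective f →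
      M ⊆ Set.range f → M.Nonempty → M ≠ Set.range f → ConnectedObj adj0 M →
      (∀ i j : ZMod l, f i ∈ M → f j ∈ M → adj1 (f i) (f j) → j = i + 1 ∨ i = j + 1) →
      (∀ i j : ZMod l, f i ∈ M → f j ∈ M → (j = i + 1 ∨ i = j + 1) → adj1 (f i) (f j)) →
      (vcount M : ℤ) = 2 * ((M.ncard : ℤ) + 1) := by
    intro l hl f hf hsub hne hprop hconn C1 C2
    obtain ⟨n, hn, g, hmem, hsur, hinj, h1, h3, h2⟩ :=
      arc_path hl f hf hsub hne hprop hconn ht C1 C2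
    exact final_count hn hmem hsur hinj h1 h3 h2
  rcases hM with hA | hB
  · obtain ⟨hne, hconn, ρ, ⟨l, hl, f, hfinj, hrange, hcurve, _⟩, hsub, hprop⟩ := hA
    subst hrange
    refine main l hl f hfinj hsub hne hprop hconn ?_ ?_
    · intro i j _ _ hadj
      exact (hcurve i j).mp (adj1_to_adj0 hadj)
    · intro i j hiM hjM hcons
      have hadj0 : adj0 (f i) (f j) := (hcurve i j).mpr hcons
      rcases adj0_cases hadj0 with h | hdg
      · exact h
      · exfalso
        obtain ⟨c, hcM, hcu, hcv⟩ := filler ht hiM hjM hdg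
        obtain ⟨k, rfl⟩ := hsub hcM
        have hki := (hcurve k i).mp (adj1_to_adj0 hcu)
        have hkj := (hcurve k j).mp (adj1_to_adj0 hcv)
        have hij : i ≠ j := fun h => hadj0.1 (congrArg f h)
        have hik : i ≠ k := fun h => (adj1_to_adj0 hcu).1 (congrArg f h.symm)
        have hjk : j ≠ k := fun h => (adj1_to_adj0 hcv).1 (congrArg f h.symm)
        have hall := cons3 hij hik hjk hcons hki.symm hkj.symm
        apply hprop
        apply Set.Subset.antisymm hsub
        rintro y ⟨m, rfl⟩
        rcases hall m with h | h | h
        · rw [h]; exact hiM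
        · rw [h]; exact hjM
        · rw [h]; exact hcM
  · obtain ⟨hne, hconn, ρ, ⟨l, hl, f, hfinj, hrange, hcurve, _⟩, hsub, hprop⟩ := hB
    subst hrange
    refine main l hl f hfinj hsub hne hprop hconn ?_ ?_
    · intro i j _ _ hadj
      exact (hcurve i j).mp hadj
    · intro i j _ _ hcons
      exact (hcurve i j).mpr hcons
end

section
/- Adding a single pixel P ∉ D to a digital object D cannot simultaneously increase the number of holes and the number of 0-connected components: it is not the case that both h(D ∪ {P}) > h(D) and c(D ∪ {P}) > c(D). -/
open Set

/-! If `P` is 0-adjacent to a pixel of `D`, it merely joins an existing 0-component, so `c` does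
not increase. Otherwise the eight neighbours of `P` all lie in the complement and form a
1-connected ring, so every 1-path of `ℤ² \ D` through `P` can be rerouted around `P`. Hence each
hole of `D ∪ {P}` grows, by at most the point `P`, into a hole of `D`, and distinct holes of
`D ∪ {P}` grow into distinct holes of `D`: `h` does not increase. -/

section Connectivity

variable {adj : Pt → Pt → Prop} {S T : Set Pt} {x y z : Pt}

def componentOf (adj : Pt → Pt → Prop) (S : Set Pt) (x : Pt) : Set Pt :=
  {y | y ∈ S ∧ connIn adj S x y}

def saturation (adj : Pt → Pt → Prop) (T C : Set Pt) : Set Pt :=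
  {y | y ∈ T ∧ ∃ x ∈ C, connIn adj T x y}

lemma connIn_mono (hST : S ⊆ T) (h : connIn adj S x y) : connIn adj T x y :=
  Relation.ReflTransGen.mono (fun _ _ h => ⟨hST h.1, hST h.2.1, h.2.2⟩) _ _ h

lemma mem_componentOf_self (hx : x ∈ S) : x ∈ componentOf adj S x := ⟨hx, .refl⟩

lemma componentOf_mem_components (hx : x ∈ S) : componentOf adj S x ∈ components adj S :=
  ⟨x, hx, rfl⟩

lemma components_finite (hS : S.Finite) : (components adj S).Finite :=
  hS.finite_subsets.subset fun _ ⟨_, _, hC⟩ => hC ▸ fun _ hy => hy.1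

lemma saturation_componentOf (hST : S ⊆ T) (hz : z ∈ S) :
    saturation adj T (componentOf adj S z) = componentOf adj T z := by
  ext y
  constructor
  · rintro ⟨hyT, x, hx, hxy⟩
    exact ⟨hyT, (connIn_mono hST hx.2).trans hxy⟩
  · rintro ⟨hyT, hzy⟩
    exact ⟨hyT, z, mem_componentOf_self hz, hzy⟩

variable [Std.Symm adj]

lemma connIn_symm (h : connIn adj S x y) : connIn adj S y x := by
  induction h with
  | refl => exact .refl
  | tail _ step ih => exact .head ⟨step.2.1, step.1, Std.Symm.symm _ _ step.2.2⟩ ih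

lemma componentOf_eq_of_connIn (h : connIn adj S x y) :
    componentOf adj S x = componentOf adj S y := by
  ext z
  exact ⟨fun hz => ⟨hz.1, (connIn_symm h).trans hz.2⟩, fun hz => ⟨hz.1, h.trans hz.2⟩⟩

lemma ncard_components_le_of_forall_connIn (hS : S.Finite) (hST : S ⊆ T)
    (hcover : ∀ z ∈ T, ∃ z₀ ∈ S, connIn adj T z z₀) :
    (components adj T).ncard ≤ (components adj S).ncard := by
  have hsurj : SurjOn (saturation adj T) (components adj S) (components adj T) := by
    rintro _ ⟨z, hz, rfl⟩
    obtain ⟨z₀, hz₀, hzz₀⟩ := hcover z hz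
    refine ⟨componentOf adj S z₀, componentOf_mem_components hz₀, ?_⟩
    rw [saturation_componentOf hST hz₀]
    exact (componentOf_eq_of_connIn hzz₀).symm
  calc (components adj T).ncard
      ≤ (saturation adj T '' components adj S).ncard :=
        ncard_le_ncard hsurj ((components_finite hS).image _)
    _ ≤ (components adj S).ncard := ncard_image_le (components_finite hS)

lemma connIn_of_connIn_insert {P : Pt} (hPS : P ∉ S)
    (hnbr : ∀ m ∈ S, ∀ n ∈ S, adj m P → adj n P → connIn adj S m n)
    (hx : x ∈ S) (hy : y ∈ S) (h : connIn adj (insert P S) x y) : connIn adj S x y := by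
  suffices key : ∀ v, connIn adj (insert P S) x v →
      (v ∈ S → connIn adj S x v) ∧ (v = P → ∀ n ∈ S, adj n P → connIn adj S x n) from
    (key y h).1 hy
  intro v hv
  induction hv with
  | refl => exact ⟨fun _ => .refl, fun hxP => absurd (hxP ▸ hx) hPS⟩
  | @tail b c _ step ih =>
    obtain ⟨hb, -, hbc⟩ := step
    rcases eq_or_ne b P with rfl | hbP
    · exact ⟨fun hc => ih.2 rfl c hc (Std.Symm.symm _ _ hbc), fun _ => ih.2 rfl⟩
    have hbS : b ∈ S := hb.resolve_left hbP
    refine ⟨fun hc => (ih.1 hbS).tail ⟨hbS, hc, hbc⟩, ?_⟩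
    rintro rfl n hn hnP
    exact (ih.1 hbS).trans (hnbr b hbS n hn hbc hnP)

end Connectivity

instance : Std.Symm adj0 where
  symm _ _ h := ⟨h.1.symm, by rw [abs_sub_comm]; exact h.2.1, by rw [abs_sub_comm]; exact h.2.2⟩

instance : Std.Symm adj1 where
  symm a b h := by unfold adj1 at *; rwa [abs_sub_comm, abs_sub_comm b.2]

lemma ccount_insert_le_of_adj0 {D : Set Pt} (hD : D.Finite) {P d : Pt} (hd : d ∈ D)
    (hPd : adj0 P d) : ccount (insert P D) ≤ ccount D := by
  refine ncard_components_le_of_forall_connIn hD (subset_insert _ _) ?_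
  rintro z (rfl | hz)
  · exact ⟨d, hd, .single ⟨mem_insert _ _, mem_insert_of_mem _ hd, hPd⟩⟩
  · exact ⟨z, hz, .refl⟩

/-- The rightmost point of a finite component of `Sᶜ` has its right neighbour in `S`. -/
lemma finite_holes {S : Set Pt} (hS : S.Finite) :
    {C | C ∈ components adj1 Sᶜ ∧ C.Finite}.Finite := by
  set L : Set Pt := (fun q : Pt => (q.1 + 1, q.2)) ⁻¹' S
  have hL : L.Finite := hS.preimage fun a _ b _ hab => by
    simp only [Prod.mk.injEq, add_left_inj] at hab
    exact Prod.ext hab.1 hab.2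
  refine (hL.image (componentOf adj1 Sᶜ)).subset ?_
  rintro C ⟨⟨x, hx, rfl⟩, hfin⟩
  obtain ⟨a, ha, hmax⟩ := hfin.exists_maximalFor Prod.fst _ ⟨x, mem_componentOf_self hx⟩
  refine ⟨a, ?_, (componentOf_eq_of_connIn ha.2).symm⟩
  by_contra hr
  have hrC : (a.1 + 1, a.2) ∈ componentOf adj1 Sᶜ x :=
    ⟨hr, ha.2.tail ⟨ha.1, hr, by simp [adj1]⟩⟩
  simpa using hmax hrC (by simp)

lemma adj1_cases {n P : Pt} (h : adj1 n P) :
    n = (P.1 + 1, P.2) ∨ n = (P.1 - 1, P.2) ∨ n = (P.1, P.2 + 1) ∨ n = (P.1, P.2 - 1) := by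
  obtain ⟨n1, n2⟩ := n
  simp only [adj1, Prod.mk.injEq] at h ⊢
  rcases abs_cases (n1 - P.1) with ⟨h1, h1'⟩ | ⟨h1, h1'⟩ <;>
    rcases abs_cases (n2 - P.2) with ⟨h2, h2'⟩ | ⟨h2, h2'⟩ <;> omega

lemma connIn_adj1_of_ring {B : Set Pt} {P m n : Pt} (hring : ∀ q, adj0 q P → q ∈ B)
    (hm : adj1 m P) (hn : adj1 n P) : connIn adj1 B m n := by
  have step : ∀ u v, adj0 u P → adj0 v P → adj1 u v → connIn adj1 B u v :=
    fun u v hu hv h => .single ⟨hring u hu, hring v hv, h⟩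
  have to_east : ∀ m, adj1 m P → connIn adj1 B m (P.1 + 1, P.2) := by
    intro m hm
    rcases adj1_cases hm with rfl | rfl | rfl | rfl
    · exact .refl
    · refine (((step _ (P.1 - 1, P.2 + 1) ?_ ?_ ?_).trans (step _ (P.1, P.2 + 1) ?_ ?_ ?_)).trans
        (step _ (P.1 + 1, P.2 + 1) ?_ ?_ ?_)).trans (step _ _ ?_ ?_ ?_) <;>
        simp [adj0, adj1, Prod.ext_iff]
    · refine (step _ (P.1 + 1, P.2 + 1) ?_ ?_ ?_).trans (step _ _ ?_ ?_ ?_) <;>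
        simp [adj0, adj1, Prod.ext_iff]
    · refine (step _ (P.1 + 1, P.2 - 1) ?_ ?_ ?_).trans (step _ _ ?_ ?_ ?_) <;>
        simp [adj0, adj1, Prod.ext_iff]
  exact (to_east m hm).trans (connIn_symm (to_east n hn))

lemma hcount_insert_le_of_isolated {D : Set Pt} (hD : D.Finite) {P : Pt}
    (hiso : ∀ d ∈ D, ¬ adj0 P d) : hcount (insert P D) ≤ hcount D := by
  set B : Set Pt := (insert P D)ᶜ
  have hPB : P ∉ B := fun h => h (mem_insert _ _)
  have hBsub : B ⊆ Dᶜ := compl_subset_compl.2 (subset_insert _ _)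
  have hDc_sub : Dᶜ ⊆ insert P B := fun q hq => by
    rcases eq_or_ne q P with rfl | hqP
    · exact mem_insert _ _
    · exact mem_insert_of_mem _ fun h => h.elim hqP hq
  have hring : ∀ q, adj0 q P → q ∈ B := fun q hq h =>
    h.elim (fun e => hq.1 e) fun hqD => hiso q hqD (Std.Symm.symm _ _ hq)
  have reroute : ∀ u ∈ B, ∀ v ∈ B, connIn adj1 Dᶜ u v → connIn adj1 B u v :=
    fun u hu v hv h => connIn_of_connIn_insert hPB
      (fun m _ n _ hm hn => connIn_adj1_of_ring hring hm hn) hu hv (connIn_mono hDc_sub h)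
  refine ncard_le_ncard_of_injOn (saturation adj1 Dᶜ) ?_ ?_ (finite_holes hD)
  · rintro _ ⟨⟨z, hz, rfl⟩, hfin⟩
    change (componentOf adj1 B z).Finite at hfin
    change saturation adj1 Dᶜ (componentOf adj1 B z) ∈ _
    rw [saturation_componentOf hBsub hz]
    refine ⟨componentOf_mem_components (hBsub hz),
      (hfin.insert P).subset fun y ⟨hy, hzy⟩ => ?_⟩
    rcases eq_or_ne y P with rfl | hyP
    · exact mem_insert _ _
    · have hyB : y ∈ B := (hDc_sub hy).resolve_left hyP
      exact mem_insert_of_mem _ ⟨hyB, reroute z hz y hyB hzy⟩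
  · rintro _ ⟨⟨z₁, hz₁, rfl⟩, -⟩ _ ⟨⟨z₂, hz₂, rfl⟩, -⟩ he
    change saturation adj1 Dᶜ (componentOf adj1 B z₁) =
      saturation adj1 Dᶜ (componentOf adj1 B z₂) at he
    rw [saturation_componentOf hBsub hz₁, saturation_componentOf hBsub hz₂] at he
    have hz₂₁ : z₂ ∈ componentOf adj1 Dᶜ z₁ := he ▸ mem_componentOf_self (hBsub hz₂)
    exact componentOf_eq_of_connIn (reroute z₁ hz₁ z₂ hz₂ hz₂₁.2)

theorem not_holes_and_components_increase_general (D : Set Pt) (hD : D.Finite) (P : Pt) :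
    ¬ (hcount D < hcount (insert P D) ∧ ccount D < ccount (insert P D)) := by
  rintro ⟨hh, hc⟩
  by_cases hadj : ∃ d ∈ D, adj0 P d
  · obtain ⟨d, hd, hPd⟩ := hadj
    exact (ccount_insert_le_of_adj0 hD hd hPd).not_gt hc
  · push Not at hadj
    exact (hcount_insert_le_of_isolated hD hadj).not_gt hh

theorem not_holes_and_components_increase (D : Set Pt) (hD : D.Finite) (P : Pt)
    (hP : P ∉ D) :
    ¬ (hcount D < hcount (insert P D) ∧ ccount D < ccount (insert P D)) :=
  not_holes_and_components_increase_general D hD P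
end
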